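/- arXiv:2301.03316 — 5 statements merged into one kernel-verified Lean document; each statement's English description precedes it below -/
import Mathlib

section
/- Let λ = (λ_1,…,λ_n) be a partition of n, set d_i = λ_i + n − i and P = {d_1,…,d_n}. Then for every i with 1 ≤ i ≤ n, the cardinality of the set {j : 1 ≤ j ≤ d_i and d_i − j ∉ P} equals λ_i. -/
/-- `d_i = λ_i + n − i`, with rows indexed by `i : Fin n` (so `i` stands for row `i+1`). -/
def dSeq (n : ℕ) (lam : Fin n → ℕ) (i : Fin n) : ℕ := lam i + (n - 1 - (i : ℕ))

/-- `P = {d_1, …, d_n}`. -/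
def dSet (n : ℕ) (lam : Fin n → ℕ) : Finset ℕ := Finset.image (dSeq n lam) Finset.univ

/-!
Since `d` is strictly decreasing, the elements of `P` below `d_i` are exactly `d_{i+1}, …, d_n`,
so `n − i` of the `d_i` values `d_i − j ∈ {0, …, d_i − 1}` lie in `P`, and the remaining
`d_i − (n − i) = λ_i` do not.
-/

open Finset

lemma card_filter_Icc_one_sub (p : ℕ → Prop) [DecidablePred p] (d : ℕ) :
    ((Icc 1 d).filter (fun j => p (d - j))).card = ((range d).filter p).card := by
  apply card_nbij' (d - ·) (d - ·) <;> intro j hj <;>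
    simp only [coe_filter, mem_Icc, mem_range, Set.mem_ofPred_eq] at hj ⊢
  · exact ⟨by omega, hj.2⟩
  · rw [Nat.sub_sub_self hj.1.le]
    exact ⟨by omega, hj.2⟩
  all_goals omega

lemma filter_range_mem_image_univ_of_strictAnti {n : ℕ} {f : Fin n → ℕ} (hf : StrictAnti f)
    (i : Fin n) : (range (f i)).filter (· ∈ univ.image f) = (Ioi i).image f := by
  ext m
  simp only [mem_filter, mem_range, mem_image, mem_univ, true_and, mem_Ioi]
  constructor
  · rintro ⟨hlt, k, rfl⟩
    exact ⟨k, hf.lt_iff_gt.mp hlt, rfl⟩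
  · rintro ⟨k, hk, rfl⟩
    exact ⟨hf hk, k, rfl⟩

lemma card_filter_range_mem_image_univ_of_strictAnti {n : ℕ} {f : Fin n → ℕ}
    (hf : StrictAnti f) (i : Fin n) :
    ((range (f i)).filter (· ∈ univ.image f)).card = n - 1 - i := by
  rw [filter_range_mem_image_univ_of_strictAnti hf, card_image_of_injective _ hf.injective,
    Fin.card_Ioi]

lemma dSeq_strictAnti {n : ℕ} {lam : Fin n → ℕ} (hanti : Antitone lam) :
    StrictAnti (dSeq n lam) := by
  intro a b hab
  have hlam : lam b ≤ lam a := hanti hab.le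
  have hb := b.isLt
  have hab' : (a : ℕ) < b := hab
  unfold dSeq
  omega

theorem card_filter_not_mem_dSet_eq_general (n : ℕ) (lam : Fin n → ℕ)
    (hanti : Antitone lam) (i : Fin n) :
    ((Finset.Icc 1 (dSeq n lam i)).filter
      (fun j => dSeq n lam i - j ∉ dSet n lam)).card = lam i := by
  rw [card_filter_Icc_one_sub (· ∉ dSet n lam)]
  have hsplit := card_filter_add_card_filter_not (s := range (dSeq n lam i)) (· ∈ dSet n lam)
  have hbelow := card_filter_range_mem_image_univ_of_strictAnti (dSeq_strictAnti hanti) i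
  have hd : dSeq n lam i = lam i + (n - 1 - i) := rfl
  rw [card_range] at hsplit
  rw [← dSet] at hbelow
  omega

/-- Lemma 1: for a partition `λ` of `n`, the number of `j` with `1 ≤ j ≤ d_i` and
`d_i − j ∉ P` equals `λ_i`. -/
theorem card_filter_not_mem_dSet_eq (n : ℕ) (lam : Fin n → ℕ)
    (hanti : Antitone lam) (hsum : ∑ i, lam i = n) (i : Fin n) :
    ((Finset.Icc 1 (dSeq n lam i)).filter
      (fun j => dSeq n lam i - j ∉ dSet n lam)).card = lam i :=
  card_filter_not_mem_dSet_eq_general n lam hanti i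
end

section
/- Let λ = (λ_1,…,λ_n) be a partition of n, d_i = λ_i + n − i, P = {d_1,…,d_n}, and let f_i = u^{d_i} + Σ_{j : 1 ≤ j ≤ d_i, d_i−j ∉ P} f_{i,j} u^{d_i−j} ∈ R[u], where R is the polynomial ring over ℂ in the variables f_{i,j}, graded by deg f_{i,j} = j. Then the Wronskian Wr(f_1,…,f_n) is a homogeneous polynomial of degree n: writing Wr(f_1,…,f_n) = Σ_{s=0}^n r_s u^{n−s}, each coefficient r_s ∈ R is homogeneous of degree s. -/
/-- `f_i = u^{d_i} + Σ_{j : 1 ≤ j ≤ d_i, d_i−j ∉ P} f_{i,j} u^{d_i−j}`, a polynomial in `u`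
over the polynomial ring `ℂ[f_{i,j}]` (the variable `f_{i,j}` is `MvPolynomial.X (i,j)`). -/
noncomputable def rowPoly (n : ℕ) (lam : Fin n → ℕ) (i : Fin n) :
    Polynomial (MvPolynomial (Fin n × ℕ) ℂ) :=
  Polynomial.X ^ (dSeq n lam i) +
    ∑ j ∈ (Finset.Icc 1 (dSeq n lam i)).filter (fun j => dSeq n lam i - j ∉ dSet n lam),
      Polynomial.C (MvPolynomial.X (i, j)) * Polynomial.X ^ (dSeq n lam i - j)

/-- The Wronskian `Wr(f_1,…,f_n)`. -/
noncomputable def wronskianPoly (n : ℕ) (lam : Fin n → ℕ) :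
    Polynomial (MvPolynomial (Fin n × ℕ) ℂ) :=
  Matrix.det (Matrix.of fun a b : Fin n => Polynomial.derivative^[(a : ℕ)] (rowPoly n lam b))

/-- `r_s`: the coefficient of `u^{n−s}` in `Wr(f_1,…,f_n)`. -/
noncomputable def rCoeff (n : ℕ) (lam : Fin n → ℕ) (s : ℕ) : MvPolynomial (Fin n × ℕ) ℂ :=
  (wronskianPoly n lam).coeff (n - s)


/-!
Give `u` weight `1`. Then `f_i` is homogeneous of degree `d_i`, since `f_{i,j} u^{d_i - j}` has
weight `j + (d_i - j)`, and each derivative lowers the degree by one. Every term of the Leibniz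
expansion of the Wronskian therefore has degree `∑ d_i - ∑ (i - 1) = ∑ λ_i = n`. Homogeneity of
degree `n` says that the coefficient of `u^{n-s}` has degree `s`, and since all weights are
nonnegative, no power of `u` above `n` occurs.
-/

theorem Finsupp.weight_natCast {σ : Type*} (w : σ → ℕ) (d : σ →₀ ℕ) :
    weight (fun i => (w i : ℤ)) d = weight w d := by
  simp only [weight_apply, nsmul_eq_mul, smul_eq_mul, Finsupp.sum, Nat.cast_sum, Nat.cast_mul]

namespace MvPolynomial.IsWeightedHomogeneous

variable {σ R : Type*} [CommSemiring R] {w : σ → ℕ} {φ : MvPolynomial σ R}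

theorem of_natCast {m : ℕ} (h : φ.IsWeightedHomogeneous (fun i => (w i : ℤ)) m) :
    φ.IsWeightedHomogeneous w m := fun d hd => by
  simpa [Finsupp.weight_natCast] using h hd

theorem eq_zero_of_natCast_of_neg {m : ℤ} (h : φ.IsWeightedHomogeneous (fun i => (w i : ℤ)) m)
    (hm : m < 0) : φ = 0 := by
  refine h.eq_zero_of_no_monomials fun d hd => ?_
  rw [← hd, Finsupp.weight_natCast] at hm
  omega

end MvPolynomial.IsWeightedHomogeneous

namespace Polynomial

variable {σ R : Type*} [CommRing R]

/-- Homogeneity of degree `D` when `X` has weight `1`; degrees live in `ℤ` so that `D - k` does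
not truncate. -/
def IsWeightedHomogeneousWithX (w : σ → ℤ) (D : ℤ) (p : (MvPolynomial σ R)[X]) : Prop :=
  ∀ k : ℕ, (p.coeff k).IsWeightedHomogeneous w (D - k)

namespace IsWeightedHomogeneousWithX

variable {w : σ → ℤ} {D E : ℤ} {p q : (MvPolynomial σ R)[X]}

theorem X_pow (n : ℕ) : IsWeightedHomogeneousWithX w n (X ^ n : (MvPolynomial σ R)[X]) := by
  intro k
  rw [coeff_X_pow]
  split_ifs with h
  · subst h
    simpa using MvPolynomial.isWeightedHomogeneous_one R w
  · exact MvPolynomial.isWeightedHomogeneous_zero _ _ _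

theorem C_mul_X_pow {φ : MvPolynomial σ R} (hφ : φ.IsWeightedHomogeneous w D) (n : ℕ) :
    IsWeightedHomogeneousWithX w (D + n) (C φ * X ^ n) := by
  intro k
  rw [coeff_C_mul_X_pow]
  split_ifs with h
  · subst h
    simpa using hφ
  · exact MvPolynomial.isWeightedHomogeneous_zero _ _ _

theorem add (hp : IsWeightedHomogeneousWithX w D p) (hq : IsWeightedHomogeneousWithX w D q) :
    IsWeightedHomogeneousWithX w D (p + q) := fun k => by
  rw [coeff_add]
  exact (hp k).add (hq k)

theorem sum {ι : Type*} (s : Finset ι) {f : ι → (MvPolynomial σ R)[X]}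
    (h : ∀ i ∈ s, IsWeightedHomogeneousWithX w D (f i)) :
    IsWeightedHomogeneousWithX w D (∑ i ∈ s, f i) := fun k => by
  rw [finsetSum_coeff]
  exact MvPolynomial.IsWeightedHomogeneous.sum _ _ _ fun i hi => h i hi k

theorem zsmul (hp : IsWeightedHomogeneousWithX w D p) (z : ℤ) :
    IsWeightedHomogeneousWithX w D (z • p) := fun k => by
  rw [coeff_smul]
  exact zsmul_mem (show _ ∈ MvPolynomial.weightedHomogeneousSubmodule R w _ from hp k) z

theorem mul (hp : IsWeightedHomogeneousWithX w D p) (hq : IsWeightedHomogeneousWithX w E q) :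
    IsWeightedHomogeneousWithX w (D + E) (p * q) := fun k => by
  rw [coeff_mul]
  refine MvPolynomial.IsWeightedHomogeneous.sum _ _ _ fun x hx => ?_
  rw [Finset.HasAntidiagonal.mem_antidiagonal] at hx
  convert (hp x.1).mul (hq x.2) using 1
  rw [← hx]
  push_cast
  ring

theorem prod {ι : Type*} (s : Finset ι) {f : ι → (MvPolynomial σ R)[X]} {d : ι → ℤ}
    (h : ∀ i ∈ s, IsWeightedHomogeneousWithX w (d i) (f i)) :
    IsWeightedHomogeneousWithX w (∑ i ∈ s, d i) (∏ i ∈ s, f i) := by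
  classical
  induction s using Finset.induction_on with
  | empty => simpa using X_pow (w := w) (R := R) 0
  | insert a s ha ih =>
    rw [Finset.prod_insert ha, Finset.sum_insert ha]
    exact (h a (s.mem_insert_self a)).mul (ih fun i hi => h i (Finset.mem_insert_of_mem hi))

theorem derivative (hp : IsWeightedHomogeneousWithX w D p) :
    IsWeightedHomogeneousWithX w (D - 1) (derivative p) := fun k => by
  rw [coeff_derivative]
  convert (hp (k + 1)).mul (MvPolynomial.isWeightedHomogeneous_C w ((k + 1 : ℕ) : R)) using 1
  · simp
  · push_cast
    ring

theorem iterate_derivative (hp : IsWeightedHomogeneousWithX w D p) (a : ℕ) :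
    IsWeightedHomogeneousWithX w (D - a) (Polynomial.derivative^[a] p) := by
  induction a with
  | zero => simpa using hp
  | succ a ih =>
    rw [Function.iterate_succ_apply']
    convert ih.derivative using 1
    push_cast
    ring

theorem det {ι : Type*} [Fintype ι] [DecidableEq ι] {M : Matrix ι ι (MvPolynomial σ R)[X]}
    (r c : ι → ℤ) (hM : ∀ a b, IsWeightedHomogeneousWithX w (r a + c b) (M a b)) :
    IsWeightedHomogeneousWithX w (∑ a, r a + ∑ b, c b) M.det := by
  rw [Matrix.det_apply]
  refine sum _ fun τ _ => ?_
  have hdeg : ∑ i, (r (τ i) + c i) = ∑ a, r a + ∑ b, c b := by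
    rw [Finset.sum_add_distrib, Equiv.sum_comp τ r]
  rw [Units.smul_def, ← hdeg]
  exact (prod _ fun i _ => hM (τ i) i).zsmul _

theorem wronskian {n : ℕ} {f : Fin n → (MvPolynomial σ R)[X]} {d : Fin n → ℤ}
    (hf : ∀ b, IsWeightedHomogeneousWithX w (d b) (f b)) :
    IsWeightedHomogeneousWithX w (∑ b, d b - ∑ a : Fin n, (a : ℤ))
      (Matrix.of fun a b : Fin n => Polynomial.derivative^[a] (f b)).det := by
  convert det (fun a : Fin n => -(a : ℤ)) d fun a b => ?_ using 1
  · rw [Finset.sum_neg_distrib]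
    ring
  · rw [Matrix.of_apply, neg_add_eq_sub]
    exact (hf b).iterate_derivative a

variable {w : σ → ℕ} {D : ℕ} {p : (MvPolynomial σ R)[X]}

theorem natDegree_le (hp : IsWeightedHomogeneousWithX (fun i => (w i : ℤ)) D p) :
    p.natDegree ≤ D :=
  natDegree_le_iff_coeff_eq_zero.mpr fun k hk => (hp k).eq_zero_of_natCast_of_neg (by omega)

theorem coeff_sub (hp : IsWeightedHomogeneousWithX (fun i => (w i : ℤ)) D p) {s : ℕ}
    (hs : s ≤ D) : (p.coeff (D - s)).IsWeightedHomogeneous w s := by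
  have := hp (D - s)
  rw [show (D : ℤ) - (D - s : ℕ) = s by omega] at this
  exact this.of_natCast

end IsWeightedHomogeneousWithX

end Polynomial

open Polynomial

theorem rowPoly_isWeightedHomogeneousWithX (n : ℕ) (lam : Fin n → ℕ) (i : Fin n) :
    IsWeightedHomogeneousWithX (fun p : Fin n × ℕ => (p.2 : ℤ)) (dSeq n lam i)
      (rowPoly n lam i) := by
  refine (IsWeightedHomogeneousWithX.X_pow _).add (IsWeightedHomogeneousWithX.sum _ fun j hj => ?_)
  have hj : j ≤ dSeq n lam i := (Finset.mem_Icc.mp (Finset.mem_filter.mp hj).1).2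
  convert IsWeightedHomogeneousWithX.C_mul_X_pow
    (MvPolynomial.isWeightedHomogeneous_X ℂ (fun p : Fin n × ℕ => (p.2 : ℤ)) (i, j)) _ using 1
  omega

theorem sum_dSeq (n : ℕ) (lam : Fin n → ℕ) :
    ∑ i, dSeq n lam i = ∑ i, lam i + ∑ i : Fin n, (i : ℕ) := by
  simp only [dSeq, Finset.sum_add_distrib]
  congr 1
  exact Fintype.sum_equiv Fin.revPerm _ _ fun i => by
    simp only [Fin.revPerm_apply, Fin.val_rev]
    omega

theorem wronskianPoly_homogeneous_general (n : ℕ) (lam : Fin n → ℕ)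
    (hsum : ∑ i, lam i = n) :
    (wronskianPoly n lam).natDegree ≤ n ∧
      ∀ s : ℕ, s ≤ n →
        MvPolynomial.IsWeightedHomogeneous (fun p : Fin n × ℕ => p.2)
          (rCoeff n lam s) s := by
  have hdeg : ∑ i, (dSeq n lam i : ℤ) - ∑ i : Fin n, (i : ℤ) = n := by
    have h := congrArg (Nat.cast : ℕ → ℤ) (sum_dSeq n lam)
    rw [hsum] at h
    push_cast at h
    linarith
  have hW :
      IsWeightedHomogeneousWithX (fun p : Fin n × ℕ => (p.2 : ℤ)) n (wronskianPoly n lam) :=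
    hdeg ▸ IsWeightedHomogeneousWithX.wronskian (rowPoly_isWeightedHomogeneousWithX n lam)
  exact ⟨hW.natDegree_le, fun s hs => hW.coeff_sub hs⟩

/-- Lemma: grading `ℂ[f_{i,j}]` by `deg f_{i,j} = j`, the Wronskian `Wr(f_1,…,f_n)` is a
homogeneous polynomial of degree `n`: writing `Wr = Σ_{s=0}^n r_s u^{n−s}`, each
coefficient `r_s` is homogeneous of degree `s`. -/
theorem wronskianPoly_homogeneous (n : ℕ) (lam : Fin n → ℕ)
    (hanti : Antitone lam) (hsum : ∑ i, lam i = n) :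
    (wronskianPoly n lam).natDegree ≤ n ∧
      ∀ s : ℕ, s ≤ n →
        MvPolynomial.IsWeightedHomogeneous (fun p : Fin n × ℕ => p.2)
          (rCoeff n lam s) s :=
  wronskianPoly_homogeneous_general n lam hsum
end

section
/- Let r_1,…,r_n ∈ ℂ[x_1,…,x_n] be polynomials each with zero constant term, and suppose the quotient algebra A = ℂ[x_1,…,x_n]/(r_1,…,r_n) is finite-dimensional as a ℂ-vector space. Then for each j ∈ {1,…,n} there exist k ≥ 1 and i ∈ {1,…,n} such that the monomial x_j^k occurs with nonzero coefficient in r_i. -/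
/-- Lemma: let `r_1,…,r_n ∈ ℂ[x_1,…,x_n]` have zero constant term, and suppose
`A = ℂ[x_1,…,x_n]/(r_1,…,r_n)` is finite dimensional over ℂ.  Then for each `j` there
are `k ≥ 1` and `i` such that the monomial `x_j^k` occurs with nonzero coefficient
in `r_i`. -/
theorem exists_pow_monomial_of_finiteDimensional_quotient (n : ℕ)
    (r : Fin n → MvPolynomial (Fin n) ℂ)
    (hconst : ∀ i, MvPolynomial.coeff 0 (r i) = 0)
    (hfin : FiniteDimensional ℂ
      (MvPolynomial (Fin n) ℂ ⧸ Ideal.span (Set.range r)))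
    (j : Fin n) :
    ∃ (k : ℕ) (i : Fin n), 1 ≤ k ∧
      MvPolynomial.coeff (Finsupp.single j k) (r i) ≠ 0 := by
  by_contra hcon
  push_neg at hcon
  -- the evaluation map sending x_j ↦ X and other variables to 0
  set f : Fin n → Polynomial ℂ := fun i => if i = j then Polynomial.X else 0 with hf
  set ψ : MvPolynomial (Fin n) ℂ →ₐ[ℂ] Polynomial ℂ := MvPolynomial.aeval f with hψ
  have hker : ∀ p ∈ Ideal.span (Set.range r), ψ p = 0 := by
    have hri : ∀ i, ψ (r i) = 0 := by
      intro i
      rw [hψ, MvPolynomial.aeval_def, MvPolynomial.eval₂_eq]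
      apply Finset.sum_eq_zero
      intro m hm
      by_cases hd : ∀ l, l ≠ j → m l = 0
      · exfalso
        have hm' : m = Finsupp.single j (m j) := by
          ext l
          by_cases hl : l = j
          · subst hl; simp
          · simp [Finsupp.single_apply, Ne.symm hl, hd l hl]
        rcases Nat.eq_zero_or_pos (m j) with h0 | h1
        · have : m = 0 := by rw [hm', h0]; simp
          exact (MvPolynomial.mem_support_iff.mp hm) (this ▸ hconst i)
        · exact (MvPolynomial.mem_support_iff.mp hm)
            (hm' ▸ hcon (m j) i h1)
      · push_neg at hd
        obtain ⟨l, hl, hml⟩ := hd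
        have : f l ^ m l = 0 := by
          simp [hf, if_neg hl, zero_pow hml]
        rw [Finset.prod_eq_zero (Finsupp.mem_support_iff.mpr hml) this, mul_zero]
    intro p hp
    refine Submodule.span_induction ?_ ?_ ?_ ?_ hp
    · rintro x ⟨i, rfl⟩; exact hri i
    · simp
    · intro a b _ _ ha hb; simp [ha, hb]
    · intro a b _ hb
      simp only [smul_eq_mul, map_mul, hb, mul_zero]
  -- lift to an algebra map on the quotient
  let Ψ := Ideal.Quotient.liftₐ (Ideal.span (Set.range r)) ψ hker
  have hsurj : Function.Surjective Ψ := by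
    intro q
    refine ⟨Ideal.Quotient.mk _ (Polynomial.aeval (MvPolynomial.X j) q), ?_⟩
    show ψ (Polynomial.aeval (MvPolynomial.X j) q) = q
    have : (ψ.comp (Polynomial.aeval (MvPolynomial.X j) :
        Polynomial ℂ →ₐ[ℂ] MvPolynomial (Fin n) ℂ)) = AlgHom.id ℂ (Polynomial ℂ) := by
      apply Polynomial.algHom_ext
      simp [hψ, hf]
    calc ψ (Polynomial.aeval (MvPolynomial.X j) q)
        = (ψ.comp (Polynomial.aeval (MvPolynomial.X j))) q := rfl
      _ = q := by rw [this]; rfl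
  have : Module.Finite ℂ (Polynomial ℂ) :=
    Module.Finite.of_surjective Ψ.toLinearMap hsurj
  exact Polynomial.not_finite this
end

section
/- Let λ be a partition of n with variables f_{i,j} and Wronskian coefficients r_s as in the standard setup. Suppose f_{i,j} and f_{s,t} are two distinct variables with i ≠ s and d_i − j = d_s − t (i.e. they occur as coefficients of the same power of u in f_i and f_s). Then no monomial divisible by f_{i,j}·f_{s,t} occurs with nonzero coefficient in any r_k. -/
/-- Polynomials all of whose coefficients lie in a subring `S`. -/
def coeffSubring {R : Type*} [CommRing R] (S : Subring R) : Subring (Polynomial R) where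
  carrier := {p | ∀ k, p.coeff k ∈ S}
  zero_mem' := by intro k; simp only [Polynomial.coeff_zero]; exact S.zero_mem
  one_mem' := by intro k; rw [Polynomial.coeff_one]; split <;> [exact S.one_mem; exact S.zero_mem]
  add_mem' := by intro a b ha hb k; rw [Polynomial.coeff_add]; exact S.add_mem (ha k) (hb k)
  neg_mem' := by intro a ha k; rw [Polynomial.coeff_neg]; exact S.neg_mem (ha k)
  mul_mem' := by
    intro a b ha hb k
    rw [Polynomial.coeff_mul]
    exact Subring.sum_mem _ fun x _ => S.mul_mem (ha _) (hb _)

lemma iterate_derivative_mem_coeffSubring {R : Type*} [CommRing R] (S : Subring R)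
    {p : Polynomial R} (hp : p ∈ coeffSubring S) (a : ℕ) :
    Polynomial.derivative^[a] p ∈ coeffSubring S := by
  induction a generalizing p with
  | zero => simpa using hp
  | succ a ih =>
    rw [Function.iterate_succ_apply]
    refine ih ?_
    intro k
    rw [Polynomial.coeff_derivative]
    exact S.mul_mem (hp _) (S.add_mem (natCast_mem S k) S.one_mem)

lemma det_mem_subring {R : Type*} [CommRing R] (S : Subring R) {n : ℕ}
    (M : Matrix (Fin n) (Fin n) R) (h : ∀ a b, M a b ∈ S) : M.det ∈ S := by
  rw [Matrix.det_apply']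
  exact Subring.sum_mem _ fun σ _ =>
    S.mul_mem (intCast_mem S _) (Subring.prod_mem _ fun b _ => h _ _)

lemma coeff_eq_zero_of_supported {σ : Type*} (v : σ) (p : MvPolynomial σ ℂ)
    (hp : p ∈ MvPolynomial.supported ℂ {w | w ≠ v}) (m : σ →₀ ℕ) (hm : m v ≠ 0) :
    MvPolynomial.coeff m p = 0 := by
  by_contra h
  have hv : v ∈ p.vars := (MvPolynomial.mem_vars v).2
    ⟨m, MvPolynomial.mem_support_iff.2 h, Finsupp.mem_support_iff.2 hm⟩
  exact ((MvPolynomial.mem_supported.1 hp) hv) rfl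

lemma X_pow_mem_coeffSubring {R : Type*} [CommRing R] (S : Subring R) (p : ℕ) :
    (Polynomial.X : Polynomial R) ^ p ∈ coeffSubring S := by
  have hX : (Polynomial.X : Polynomial R) ∈ coeffSubring S := by
    intro k
    rw [Polynomial.coeff_X]
    split <;> [exact S.one_mem; exact S.zero_mem]
  exact pow_mem hX p

lemma C_mul_X_pow_mem_coeffSubring {R : Type*} [CommRing R] (S : Subring R) {c : R}
    (hc : c ∈ S) (p : ℕ) :
    Polynomial.C c * Polynomial.X ^ p ∈ coeffSubring S :=
  Subring.mul_mem _ (fun k => by rw [Polynomial.coeff_C]; split <;> [exact hc; exact S.zero_mem])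
    (X_pow_mem_coeffSubring S p)

lemma iterate_derivative_add' {R : Type*} [CommSemiring R] (p q : Polynomial R) (k : ℕ) :
    Polynomial.derivative^[k] (p + q)
      = Polynomial.derivative^[k] p + Polynomial.derivative^[k] q := by
  induction k generalizing p q with
  | zero => rfl
  | succ k ih => simp [Function.iterate_succ_apply, ih]

/-- Lemma: if `f_{i,j}` and `f_{s,t}` are two distinct variables with `i ≠ s` and
`d_i − j = d_s − t`, then no monomial divisible by `f_{i,j}·f_{s,t}` occurs with
nonzero coefficient in any coefficient `r_k` of the Wronskian. -/
theorem no_monomial_same_column (n : ℕ) (lam : Fin n → ℕ)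
    (hanti : Antitone lam) (hsum : ∑ i, lam i = n)
    (i s : Fin n) (j t : ℕ)
    (hj1 : 1 ≤ j) (hj2 : j ≤ dSeq n lam i) (hjP : dSeq n lam i - j ∉ dSet n lam)
    (ht1 : 1 ≤ t) (ht2 : t ≤ dSeq n lam s) (htP : dSeq n lam s - t ∉ dSet n lam)
    (hne : i ≠ s) (hcol : dSeq n lam i - j = dSeq n lam s - t)
    (m : (Fin n × ℕ) →₀ ℕ) (hmi : 1 ≤ m (i, j)) (hms : 1 ≤ m (s, t)) (k : ℕ) :
    MvPolynomial.coeff m ((wronskianPoly n lam).coeff k) = 0 := by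
  classical
  set e := dSeq n lam i - j with he
  set R := MvPolynomial (Fin n × ℕ) ℂ
  -- the two "generic" parts of rows i and s
  set Fi := (Finset.Icc 1 (dSeq n lam i)).filter (fun j' => dSeq n lam i - j' ∉ dSet n lam) with hFi
  set Fs := (Finset.Icc 1 (dSeq n lam s)).filter (fun t' => dSeq n lam s - t' ∉ dSet n lam) with hFs
  have hjF : j ∈ Fi := Finset.mem_filter.2 ⟨Finset.mem_Icc.2 ⟨hj1, hj2⟩, hjP⟩
  have htF : t ∈ Fs := Finset.mem_filter.2 ⟨Finset.mem_Icc.2 ⟨ht1, ht2⟩, htP⟩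
  set gI : Polynomial R := Polynomial.X ^ (dSeq n lam i) +
    ∑ j' ∈ Fi.erase j, Polynomial.C (MvPolynomial.X (i, j')) * Polynomial.X ^ (dSeq n lam i - j')
    with hgI
  set gS : Polynomial R := Polynomial.X ^ (dSeq n lam s) +
    ∑ t' ∈ Fs.erase t, Polynomial.C (MvPolynomial.X (s, t')) * Polynomial.X ^ (dSeq n lam s - t')
    with hgS
  set xI : Polynomial R := Polynomial.C (MvPolynomial.X (i, j)) * Polynomial.X ^ e with hxI
  set xS : Polynomial R := Polynomial.C (MvPolynomial.X (s, t)) * Polynomial.X ^ e with hxS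
  have hrowI : rowPoly n lam i = gI + xI := by
    rw [rowPoly, ← Finset.add_sum_erase _ _ hjF, hgI, hxI, he]
    ring
  have hrowS : rowPoly n lam s = gS + xS := by
    rw [rowPoly, ← Finset.add_sum_erase _ _ htF, hgS, hxS, ← hcol, he]
    ring
  set col : Polynomial R → Fin n → Polynomial R :=
    fun p a => Polynomial.derivative^[(a : ℕ)] p with hcoldef
  set M : Matrix (Fin n) (Fin n) (Polynomial R) :=
    Matrix.of fun a b : Fin n => Polynomial.derivative^[(a : ℕ)] (rowPoly n lam b) with hM
  have hW : wronskianPoly n lam = M.det := rfl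
  -- split column i
  have hsplit1 : M.det = (M.updateCol i (col gI)).det + (M.updateCol i (col xI)).det := by
    conv_lhs => rw [← Matrix.updateCol_eq_self M i]
    have : (fun a => M a i) = col gI + col xI := by
      funext a
      show Polynomial.derivative^[(a : ℕ)] (rowPoly n lam i) = _
      rw [hrowI, iterate_derivative_add']
      rfl
    rw [this, Matrix.det_updateCol_add]
  -- split column s of the second matrix
  set Mx := M.updateCol i (col xI) with hMx
  have hMxs : ∀ a, Mx a s = Polynomial.derivative^[(a : ℕ)] (rowPoly n lam s) := by
    intro a
    rw [hMx, Matrix.updateCol_apply, if_neg (Ne.symm hne)]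
    rfl
  have hsplit2 : Mx.det = (Mx.updateCol s (col gS)).det + (Mx.updateCol s (col xS)).det := by
    conv_lhs => rw [← Matrix.updateCol_eq_self Mx s]
    have : (fun a => Mx a s) = col gS + col xS := by
      funext a
      rw [hMxs a, hrowS, iterate_derivative_add']
      rfl
    rw [this, Matrix.det_updateCol_add]
  -- the doubly-special matrix has determinant 0
  have hcolx : ∀ (v : Fin n × ℕ), col (Polynomial.C (MvPolynomial.X v) * Polynomial.X ^ e)
      = (Polynomial.C (MvPolynomial.X v) : Polynomial R) • col (Polynomial.X ^ e) := by
    intro v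
    funext a
    show Polynomial.derivative^[(a : ℕ)] (Polynomial.C (MvPolynomial.X v) * Polynomial.X ^ e) = _
    rw [Polynomial.iterate_derivative_C_mul]
    simp [hcoldef, smul_eq_mul]
  have hzero : (Mx.updateCol s (col xS)).det = 0 := by
    set A := M.updateCol s (col (Polynomial.X ^ e)) with hA
    have hswap : Mx.updateCol s (col (Polynomial.X ^ e)) = A.updateCol i (col xI) := by
      refine Matrix.ext fun a b => ?_
      simp only [hMx, hA, Matrix.updateCol_apply]
      by_cases hb : b = s <;> by_cases hb' : b = i
      · exact absurd (hb'.symm.trans hb) hne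
      · simp [hb, hb', hne, Ne.symm hne]
      · simp [hb, hb', hne, Ne.symm hne]
      · simp [hb, hb', hne, Ne.symm hne]
    have hAi : (A.updateCol i (col (Polynomial.X ^ e))).det = 0 := by
      refine Matrix.det_zero_of_column_eq hne (fun a => ?_)
      rw [Matrix.updateCol_apply, if_pos rfl, Matrix.updateCol_apply, if_neg (Ne.symm hne),
        hA, Matrix.updateCol_apply, if_pos rfl]
    calc (Mx.updateCol s (col xS)).det
        = Polynomial.C (MvPolynomial.X (s, t))
            * ((Mx.updateCol s (col (Polynomial.X ^ e))).det) := by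
          rw [hxS, hcolx, Matrix.det_updateCol_smul]
      _ = Polynomial.C (MvPolynomial.X (s, t)) * ((A.updateCol i (col xI)).det) := by rw [hswap]
      _ = 0 := by
          rw [hxI, hcolx, Matrix.det_updateCol_smul, hAi]
          simp
  -- now the coefficient extraction
  have key : ∀ (v : Fin n × ℕ) (N : Matrix (Fin n) (Fin n) (Polynomial R)),
      (∀ a b, N a b ∈ coeffSubring (MvPolynomial.supported ℂ {w | w ≠ v}).toSubring) →
      m v ≠ 0 → MvPolynomial.coeff m (N.det.coeff k) = 0 := by
    intro v N hN hv
    exact coeff_eq_zero_of_supported v _ (det_mem_subring _ N hN k) m hv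
  have hSX : ∀ (v w : Fin n × ℕ), w ≠ v →
      (MvPolynomial.X w : R) ∈ (MvPolynomial.supported ℂ {w | w ≠ v}).toSubring := by
    intro v w hw
    exact MvPolynomial.X_mem_supported.2 hw
  have hrowmem : ∀ (v : Fin n × ℕ) (b : Fin n), b ≠ v.1 →
      rowPoly n lam b ∈ coeffSubring (MvPolynomial.supported ℂ {w | w ≠ v}).toSubring := by
    intro v b hb
    refine Subring.add_mem _ (X_pow_mem_coeffSubring _ _) (Subring.sum_mem _ fun j' _ => ?_)
    exact C_mul_X_pow_mem_coeffSubring _ (hSX v (b, j') (by simp [Prod.ext_iff, hb])) _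
  have hcoeff1 : MvPolynomial.coeff m ((M.updateCol i (col gI)).det.coeff k) = 0 := by
    refine key (i, j) _ (fun a b => ?_) (by omega)
    rw [Matrix.updateCol_apply]
    by_cases hb : b = i
    · rw [if_pos hb]
      refine iterate_derivative_mem_coeffSubring _ ?_ _
      rw [hgI]
      refine Subring.add_mem _ (X_pow_mem_coeffSubring _ _) (Subring.sum_mem _ fun j' hj' => ?_)
      have : j' ≠ j := Finset.ne_of_mem_erase hj'
      exact C_mul_X_pow_mem_coeffSubring _ (hSX (i, j) (i, j') (by simp [Prod.ext_iff, this])) _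
    · rw [if_neg hb]
      exact iterate_derivative_mem_coeffSubring _ (hrowmem (i, j) b hb) _
  have hcoeff2 : MvPolynomial.coeff m ((Mx.updateCol s (col gS)).det.coeff k) = 0 := by
    refine key (s, t) _ (fun a b => ?_) (by omega)
    rw [Matrix.updateCol_apply]
    by_cases hb : b = s
    · rw [if_pos hb]
      refine iterate_derivative_mem_coeffSubring _ ?_ _
      rw [hgS]
      refine Subring.add_mem _ (X_pow_mem_coeffSubring _ _) (Subring.sum_mem _ fun t' ht' => ?_)
      have : t' ≠ t := Finset.ne_of_mem_erase ht'
      exact C_mul_X_pow_mem_coeffSubring _ (hSX (s, t) (s, t') (by simp [Prod.ext_iff, this])) _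
    · rw [if_neg hb, hMx, Matrix.updateCol_apply]
      by_cases hb' : b = i
      · rw [if_pos hb']
        refine iterate_derivative_mem_coeffSubring _ ?_ _
        rw [hxI]
        exact C_mul_X_pow_mem_coeffSubring _
          (hSX (s, t) (i, j) (by simp [Prod.ext_iff]; intro h; exact absurd h hne)) _
      · rw [if_neg hb']
        exact iterate_derivative_mem_coeffSubring _ (hrowmem (s, t) b hb) _
  rw [hW, hsplit1, hsplit2, hzero, add_zero, Polynomial.coeff_add, MvPolynomial.coeff_add,
    hcoeff1, hcoeff2, add_zero]
end

section
/- Let λ be a partition of n with variables f_{i,j} and Wronskian coefficients r_s as in the standard setup. Then: (i) every monomial in the variables f_{i,j} occurring with nonzero coefficient in some r_s is squarefree (no variable occurs to a power greater than 1); and (ii) a squarefree monomial f_{i_1,j_1}···f_{i_m,j_m} (with m ≥ 1 and pairwise distinct variables) occurs with nonzero coefficient in some r_s if and only if the row indices i_1,…,i_m are pairwise distinct and the integers d_{i_1}−j_1,…,d_{i_m}−j_m are pairwise distinct. -/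
set_option maxHeartbeats 1000000
set_option synthInstance.maxHeartbeats 400000


namespace WronskAux

open Polynomial Finset

/-- Shorthand for the coefficient ring. -/
abbrev Rn (n : ℕ) := MvPolynomial (Fin n × ℕ) ℂ

variable (n : ℕ) (lam : Fin n → ℕ)

/-- Valid second indices for row `i`. -/
def validJ (i : Fin n) : Finset ℕ :=
  (Finset.Icc 1 (dSeq n lam i)).filter (fun j => dSeq n lam i - j ∉ dSet n lam)

/-- Choices for row `i`: `none` is the leading term, `some j` the term with variable `X (i,j)`. -/
def S (i : Fin n) : Finset (Option ℕ) := insert none ((validJ n lam i).image some)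

/-- Exponent of `u` in the chosen term. -/
def epo (b : Fin n) (c : Option ℕ) : ℕ := c.elim (dSeq n lam b) (fun j => dSeq n lam b - j)

/-- Variable weight of the chosen term. -/
noncomputable def wgt (b : Fin n) (c : Option ℕ) : Rn n :=
  c.elim 1 (fun j => MvPolynomial.X (b, j))

/-- Exponent Finsupp of the chosen term. -/
noncomputable def nuOf (b : Fin n) (c : Option ℕ) : (Fin n × ℕ) →₀ ℕ :=
  c.elim 0 (fun j => Finsupp.single (b, j) 1)

/-- Monomial exponent associated to a choice function. -/
noncomputable def muOf (g : Fin n → Option ℕ) : (Fin n × ℕ) →₀ ℕ := ∑ b, nuOf n b (g b)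

/-- Scalar (Vandermonde-type) determinant. -/
def zOf (e : Fin n → ℕ) : ℤ :=
  Matrix.det (Matrix.of fun b a : Fin n => ((e b).descFactorial (a : ℕ) : ℤ))

/-- Degree of the scalar Wronskian. -/
def NOf (e : Fin n → ℕ) : ℕ := (∑ b, e b) - ∑ b : Fin n, (b : ℕ)

lemma zOf_eq_vandermonde (e : Fin n → ℕ) :
    zOf n e = (Matrix.vandermonde fun b : Fin n => (e b : ℤ)).det := by
  rw [Matrix.det_eval_matrixOfPolynomials_eq_det_vandermonde (fun b : Fin n => (e b : ℤ))
    (fun a : Fin n => descPochhammer ℤ (a : ℕ))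
    (fun i => by simpa using descPochhammer_natDegree (R := ℤ) (i : ℕ))
    (fun i => by simpa using monic_descPochhammer ℤ (i : ℕ)), zOf]
  congr 1
  ext b a
  simp [descPochhammer_eval_eq_descFactorial]

lemma zOf_ne_zero_iff (e : Fin n → ℕ) : zOf n e ≠ 0 ↔ Function.Injective e := by
  rw [zOf_eq_vandermonde, Matrix.det_vandermonde_ne_zero_iff]
  constructor
  · intro h a b hab
    exact h (by simp [hab])
  · intro h a b hab
    apply h
    have h2 : ((e a : ℤ)) = ((e b : ℤ)) := hab
    exact_mod_cast h2

lemma det_iter (e : Fin n → ℕ) :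
    Matrix.det (Matrix.of fun b a : Fin n =>
        derivative^[(a : ℕ)] ((Polynomial.X : (Rn n)[X]) ^ e b)) =
      C ((zOf n e : ℤ) : Rn n) * Polynomial.X ^ NOf n e := by
  have hterm : ∀ σ : Equiv.Perm (Fin n),
      (∏ a : Fin n, derivative^[(a : ℕ)] ((Polynomial.X : (Rn n)[X]) ^ e (σ a)))
        = C (((∏ a : Fin n, ((e (σ a)).descFactorial (a : ℕ) : ℤ)) : ℤ) : Rn n) *
            Polynomial.X ^ NOf n e := by
    intro σ
    by_cases h : ∀ a : Fin n, (a : ℕ) ≤ e (σ a)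
    · have hexp : ∑ a : Fin n, (e (σ a) - (a : ℕ)) = NOf n e := by
        have h1 : ∑ a : Fin n, (e (σ a) - (a : ℕ)) + ∑ a : Fin n, (a : ℕ)
            = ∑ a : Fin n, e (σ a) := by
          rw [← Finset.sum_add_distrib]
          exact Finset.sum_congr rfl fun a _ => Nat.sub_add_cancel (h a)
        have h2 : ∑ a : Fin n, e (σ a) = ∑ b, e b := Equiv.sum_comp σ e
        rw [NOf]
        omega
      simp_rw [Polynomial.iterate_derivative_X_pow_eq_C_mul]
      rw [Finset.prod_mul_distrib, ← map_prod, Finset.prod_pow_eq_pow_sum, hexp]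
      congr 2
      push_cast
      rfl
    · push_neg at h
      obtain ⟨a, ha⟩ := h
      have hz : ((e (σ a)).descFactorial (a : ℕ) : ℤ) = 0 := by
        exact_mod_cast congrArg (fun x : ℕ => (x : ℤ))
          (Nat.descFactorial_eq_zero_iff_lt.mpr ha)
      rw [show (∏ a : Fin n, ((e (σ a)).descFactorial (a : ℕ) : ℤ)) = 0 from
        Finset.prod_eq_zero (Finset.mem_univ a) hz, Int.cast_zero, map_zero, zero_mul]
      refine Finset.prod_eq_zero (Finset.mem_univ a) ?_
      rw [Polynomial.iterate_derivative_X_pow_eq_C_mul]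
      simp [Nat.descFactorial_eq_zero_iff_lt.mpr ha]
  rw [Matrix.det_apply, zOf, Matrix.det_apply, Int.cast_sum, map_sum, Finset.sum_mul]
  refine Finset.sum_congr rfl fun σ _ => ?_
  simp only [Matrix.of_apply]
  rw [hterm σ]
  simp [Units.smul_def, zsmul_eq_mul, Int.cast_mul, Polynomial.C_eq_intCast, map_mul, mul_assoc]

lemma det_of_rows (r : Fin n → Fin n → (Rn n)[X]) :
    (Matrix.detRowAlternating (R := (Rn n)[X]) (n := Fin n)).toMultilinearMap r
      = Matrix.det (Matrix.of r) := rfl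

lemma rowPoly_decomp (b : Fin n) (a : ℕ) :
    derivative^[a] (rowPoly n lam b) =
      ∑ c ∈ S n lam b,
        C (wgt n b c) * derivative^[a] ((Polynomial.X : (Rn n)[X]) ^ epo n lam b c) := by
  have hadd : ∀ p q : (Rn n)[X],
      derivative^[a] (p + q) = derivative^[a] p + derivative^[a] q := by
    intro p q
    simp_rw [← Module.End.pow_apply, map_add]
  rw [S, Finset.sum_insert (by simp),
    Finset.sum_image (fun x _ y _ h => Option.some_injective ℕ h)]
  rw [rowPoly, hadd, Polynomial.iterate_derivative_sum]
  congr 1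
  · show derivative^[a] ((Polynomial.X : (Rn n)[X]) ^ dSeq n lam b)
      = C (1 : Rn n) * derivative^[a] ((Polynomial.X : (Rn n)[X]) ^ dSeq n lam b)
    rw [map_one, one_mul]
  · refine Finset.sum_congr rfl fun j hj => ?_
    show derivative^[a] (C (MvPolynomial.X (b, j)) * (Polynomial.X : (Rn n)[X]) ^ (dSeq n lam b - j)) = _
    rw [Polynomial.iterate_derivative_C_mul]
    rfl

lemma wr_expand :
    wronskianPoly n lam = ∑ g ∈ Fintype.piFinset (S n lam),
      C (∏ b, wgt n b (g b)) *
        (C ((zOf n (fun b => epo n lam b (g b)) : ℤ) : Rn n) *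
          Polynomial.X ^ NOf n (fun b => epo n lam b (g b))) := by
  have h1 : wronskianPoly n lam =
      Matrix.det (Matrix.of fun b a : Fin n => derivative^[(a : ℕ)] (rowPoly n lam b)) := by
    rw [wronskianPoly, ← Matrix.det_transpose]
    rfl
  rw [h1, ← det_of_rows]
  have h2 : (fun b : Fin n => fun a : Fin n => derivative^[(a : ℕ)] (rowPoly n lam b))
      = fun b => ∑ c ∈ S n lam b,
          (C (wgt n b c)) •
            fun a : Fin n => derivative^[(a : ℕ)] ((Polynomial.X : (Rn n)[X]) ^ epo n lam b c) := by
    funext b a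
    rw [rowPoly_decomp n lam b (a : ℕ), Finset.sum_apply]
    exact Finset.sum_congr rfl fun c _ => by simp [smul_eq_mul]
  rw [h2, MultilinearMap.map_sum_finset]
  refine Finset.sum_congr rfl fun g hg => ?_
  rw [MultilinearMap.map_smul_univ, det_of_rows, det_iter, smul_eq_mul, ← map_prod]

lemma prod_monomial_one {ι : Type*} (s : Finset ι) (ν : ι → (Fin n × ℕ) →₀ ℕ) :
    ∏ i ∈ s, MvPolynomial.monomial (ν i) (1 : ℂ) = MvPolynomial.monomial (∑ i ∈ s, ν i) 1 := by
  induction s using Finset.cons_induction with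
  | empty => simp
  | cons a s ha ih =>
      rw [Finset.prod_cons, ih, Finset.sum_cons, MvPolynomial.monomial_mul, one_mul]

lemma prod_wgt (g : Fin n → Option ℕ) :
    ∏ b, wgt n b (g b) = MvPolynomial.monomial (muOf n g) (1 : ℂ) := by
  rw [muOf, ← prod_monomial_one]
  refine Finset.prod_congr rfl fun b _ => ?_
  cases g b with
  | none => simp [wgt, nuOf, MvPolynomial.monomial_zero']
  | some j => rfl

lemma key (μ : (Fin n × ℕ) →₀ ℕ) (k : ℕ) :
    MvPolynomial.coeff μ ((wronskianPoly n lam).coeff k) =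
      ∑ g ∈ Fintype.piFinset (S n lam),
        if μ = muOf n g ∧ k = NOf n (fun b => epo n lam b (g b))
        then ((zOf n (fun b => epo n lam b (g b)) : ℤ) : ℂ) else 0 := by
  rw [wr_expand, Polynomial.finset_sum_coeff, MvPolynomial.coeff_sum]
  refine Finset.sum_congr rfl fun g hg => ?_
  rw [prod_wgt, Polynomial.coeff_C_mul, Polynomial.coeff_C_mul, Polynomial.coeff_X_pow]
  by_cases hk : k = NOf n (fun b => epo n lam b (g b))
  · rw [if_pos hk, mul_one,
      ← map_intCast (MvPolynomial.C : ℂ →+* Rn n) (zOf n (fun b => epo n lam b (g b))),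
      mul_comm, MvPolynomial.C_mul_monomial, mul_one, MvPolynomial.coeff_monomial]
    by_cases hμ : muOf n g = μ
    · rw [if_pos hμ, if_pos ⟨hμ.symm, hk⟩]
    · rw [if_neg hμ, if_neg (fun hc => hμ hc.1.symm)]
  · rw [if_neg hk, if_neg (fun hc => hk hc.2)]
    simp

lemma muOf_apply (g : Fin n → Option ℕ) (b : Fin n) (j : ℕ) :
    muOf n g (b, j) = if g b = some j then 1 else 0 := by
  rw [muOf, Finsupp.finset_sum_apply]
  rw [Finset.sum_eq_single b]
  · cases hc : g b with
    | none => simp [nuOf]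
    | some j' =>
        simp only [nuOf, Option.elim, Finsupp.single_apply, Prod.mk.injEq, Option.some.injEq]
        by_cases hjj : j' = j
        · simp [hjj]
        · simp [hjj]
  · intro b' _ hb'
    cases g b' with
    | none => simp [nuOf]
    | some j' => simp [nuOf, Finsupp.single_apply, Prod.ext_iff, hb']
  · intro h
    exact absurd (Finset.mem_univ b) h

lemma muOf_inj {g g' : Fin n → Option ℕ} (h : muOf n g = muOf n g') : g = g' := by
  funext b
  have happ : ∀ j : ℕ, (if g b = some j then (1:ℕ) else 0) = if g' b = some j then 1 else 0 := by
    intro j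
    rw [← muOf_apply, ← muOf_apply, h]
  cases hc : g b with
  | none =>
      cases hc' : g' b with
      | none => rfl
      | some j =>
          have h2 := happ j
          rw [hc, hc'] at h2
          simp at h2
  | some j =>
      cases hc' : g' b with
      | none =>
          have h2 := happ j
          rw [hc, hc'] at h2
          simp at h2
      | some j' =>
          have h2 := happ j
          rw [hc, hc'] at h2
          simp only [Option.some.injEq] at h2
          by_cases hjj : j' = j
          · rw [hjj]
          · rw [if_neg hjj] at h2
            simp at h2

lemma dSeq_injective (hanti : Antitone lam) : Function.Injective (dSeq n lam) := by
  have hs : StrictAnti (dSeq n lam) := by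
    intro i i' hii'
    have h1 : lam i' ≤ lam i := hanti (le_of_lt hii')
    have h2 : (i : ℕ) < (i' : ℕ) := hii'
    have h3 : (i' : ℕ) < n := i'.isLt
    simp only [dSeq]
    omega
  exact hs.injective

end WronskAux

/-- Theorem: (i) every monomial occurring with nonzero coefficient in some Wronskian
coefficient `r_s` is squarefree; (ii) a squarefree monomial
`f_{i_1,j_1}···f_{i_m,j_m}` (with `m ≥ 1` and pairwise distinct variables) occurs
with nonzero coefficient in some `r_s` if and only if its row indices are pairwise
distinct and the integers `d_{i_k} − j_k` are pairwise distinct. -/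
theorem monomials_of_wronskianPoly (n : ℕ) (lam : Fin n → ℕ)
    (hanti : Antitone lam) (hsum : ∑ i, lam i = n) :
    (∀ (m : (Fin n × ℕ) →₀ ℕ) (k : ℕ),
        MvPolynomial.coeff m ((wronskianPoly n lam).coeff k) ≠ 0 →
          ∀ p : Fin n × ℕ, m p ≤ 1) ∧
    (∀ (m : ℕ), 1 ≤ m → ∀ (idx : Fin m → Fin n × ℕ),
        Function.Injective idx →
        (∀ k, 1 ≤ (idx k).2 ∧ (idx k).2 ≤ dSeq n lam (idx k).1 ∧
          dSeq n lam (idx k).1 - (idx k).2 ∉ dSet n lam) →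
        ((∃ k : ℕ, MvPolynomial.coeff (∑ a, Finsupp.single (idx a) 1)
            ((wronskianPoly n lam).coeff k) ≠ 0) ↔
          (Function.Injective (fun a => (idx a).1) ∧
            Function.Injective (fun a => dSeq n lam (idx a).1 - (idx a).2)))) := by
  classical
  constructor
  · intro μ k hne p
    rw [WronskAux.key n lam μ k] at hne
    obtain ⟨g, hg, hval⟩ := Finset.exists_ne_zero_of_sum_ne_zero hne
    have hμ : μ = WronskAux.muOf n g := by
      by_contra h
      exact hval (if_neg (fun hc => h hc.1))
    obtain ⟨b, j⟩ := p
    rw [hμ, WronskAux.muOf_apply]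
    split <;> omega
  · intro m hm idx hinj hv
    constructor
    · rintro ⟨k, hk⟩
      rw [WronskAux.key n lam _ k] at hk
      obtain ⟨g, hg, hne⟩ := Finset.exists_ne_zero_of_sum_ne_zero hk
      have hcond : (∑ a, Finsupp.single (idx a) 1) = WronskAux.muOf n g ∧
          k = WronskAux.NOf n (fun b => WronskAux.epo n lam b (g b)) := by
        by_contra h
        exact hne (if_neg h)
      have hz : WronskAux.zOf n (fun b => WronskAux.epo n lam b (g b)) ≠ 0 := by
        intro h0
        apply hne
        rw [if_pos hcond, h0]
        simp
      have he : Function.Injective (fun b => WronskAux.epo n lam b (g b)) :=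
        (WronskAux.zOf_ne_zero_iff n _).mp hz
      have hga : ∀ a, g ((idx a).1) = some ((idx a).2) := by
        intro a
        have h1 : (1 : ℕ) ≤ (∑ a', Finsupp.single (idx a') (1 : ℕ)) (idx a) := by
          rw [Finsupp.finset_sum_apply]
          have heq : (Finsupp.single (idx a) (1 : ℕ)) (idx a) = 1 := Finsupp.single_eq_same
          calc (1 : ℕ) = (Finsupp.single (idx a) (1 : ℕ)) (idx a) := heq.symm
            _ ≤ _ := Finset.single_le_sum
                (f := fun a' => (Finsupp.single (idx a') (1 : ℕ)) (idx a))
                (fun _ _ => Nat.zero_le _) (Finset.mem_univ a)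
        rw [hcond.1] at h1
        have h3 := WronskAux.muOf_apply n g (idx a).1 (idx a).2
        rw [Prod.mk.eta] at h3
        rw [h3] at h1
        by_contra hng
        rw [if_neg hng] at h1
        omega
      have inj1 : Function.Injective (fun a => (idx a).1) := by
        intro a a' h
        simp only at h
        have h2 : some ((idx a).2) = some ((idx a').2) := by
          rw [← hga a, ← hga a', h]
        apply hinj
        exact Prod.ext h (by injection h2)
      refine ⟨inj1, ?_⟩
      intro a a' h
      simp only at h
      apply inj1
      apply he
      show WronskAux.epo n lam (idx a).1 (g ((idx a).1))
          = WronskAux.epo n lam (idx a').1 (g ((idx a').1))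
      rw [hga a, hga a']
      exact h
    · rintro ⟨inj1, inj2⟩
      set g : Fin n → Option ℕ :=
        fun b => if h : ∃ a, (idx a).1 = b then some ((idx h.choose).2) else none with hgdef
      have hga : ∀ a, g ((idx a).1) = some ((idx a).2) := by
        intro a
        have hex : ∃ a', (idx a').1 = (idx a).1 := ⟨a, rfl⟩
        rw [hgdef]
        simp only [dif_pos hex]
        have h5 : hex.choose = a := inj1 hex.choose_spec
        rw [h5]
      have hgnone : ∀ b, (∀ a, (idx a).1 ≠ b) → g b = none := by
        intro b hb
        rw [hgdef]
        exact dif_neg (fun ⟨a, ha⟩ => hb a ha)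
      have hgS : g ∈ Fintype.piFinset (WronskAux.S n lam) := by
        rw [Fintype.mem_piFinset]
        intro b
        by_cases hex : ∃ a, (idx a).1 = b
        · obtain ⟨a, ha⟩ := hex
          rw [← ha, hga a]
          apply Finset.mem_insert_of_mem
          apply Finset.mem_image_of_mem
          exact Finset.mem_filter.mpr
            ⟨Finset.mem_Icc.mpr ⟨(hv a).1, (hv a).2.1⟩, (hv a).2.2⟩
        · push_neg at hex
          rw [hgnone b hex]
          exact Finset.mem_insert_self _ _
      have hmu : WronskAux.muOf n g = ∑ a, Finsupp.single (idx a) 1 := by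
        rw [WronskAux.muOf]
        rw [← Finset.sum_subset
          (Finset.subset_univ (Finset.image (fun a => (idx a).1) Finset.univ))
          (fun b _ hb => ?_)]
        · rw [Finset.sum_image (fun a _ a' _ h => inj1 h)]
          refine Finset.sum_congr rfl fun a _ => ?_
          rw [hga a]
          show Finsupp.single ((idx a).1, (idx a).2) 1 = Finsupp.single (idx a) 1
          rw [Prod.mk.eta]
        · have hb2 : ∀ a, (idx a).1 ≠ b := by
            intro a ha
            exact hb (Finset.mem_image.mpr ⟨a, Finset.mem_univ a, ha⟩)
          rw [hgnone b hb2]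
          rfl
      have heinj : Function.Injective (fun b => WronskAux.epo n lam b (g b)) := by
        have hdi := WronskAux.dSeq_injective n lam hanti
        intro b b' hbb'
        simp only at hbb'
        by_cases hb : ∃ a, (idx a).1 = b <;> by_cases hb' : ∃ a', (idx a').1 = b'
        · obtain ⟨a, ha⟩ := hb
          obtain ⟨a', ha'⟩ := hb'
          rw [← ha, hga a, ← ha', hga a'] at hbb'
          have hbb2 : dSeq n lam (idx a).1 - (idx a).2
              = dSeq n lam (idx a').1 - (idx a').2 := hbb'
          have : a = a' := inj2 hbb2
          rw [← ha, ← ha', this]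
        · exfalso
          obtain ⟨a, ha⟩ := hb
          push_neg at hb'
          rw [← ha, hga a, hgnone b' hb'] at hbb'
          have hbb2 : dSeq n lam (idx a).1 - (idx a).2 = dSeq n lam b' := hbb'
          exact (hv a).2.2
            (by rw [hbb2]; exact Finset.mem_image_of_mem (dSeq n lam) (Finset.mem_univ b'))
        · exfalso
          obtain ⟨a', ha'⟩ := hb'
          push_neg at hb
          rw [hgnone b hb, ← ha', hga a'] at hbb'
          have hbb2 : dSeq n lam b = dSeq n lam (idx a').1 - (idx a').2 := hbb'
          exact (hv a').2.2
            (by rw [← hbb2]; exact Finset.mem_image_of_mem (dSeq n lam) (Finset.mem_univ b))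
        · push_neg at hb
          push_neg at hb'
          rw [hgnone b hb, hgnone b' hb'] at hbb'
          exact hdi hbb'
      refine ⟨WronskAux.NOf n (fun b => WronskAux.epo n lam b (g b)), ?_⟩
      rw [WronskAux.key]
      rw [Finset.sum_eq_single_of_mem g hgS (fun g' hg' hne => ?_)]
      · rw [if_pos ⟨hmu.symm, rfl⟩]
        have hz := (WronskAux.zOf_ne_zero_iff n _).mpr heinj
        exact_mod_cast Int.cast_ne_zero.mpr hz
      · apply if_neg
        rintro ⟨h1, h2⟩
        exact hne (WronskAux.muOf_inj n (by rw [hmu, ← h1]))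
end
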